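/- If Z is a chi-squared random variable with ℓ degrees of freedom, then for all t ≥ 0, P(|Z − ℓ| ≥ t) ≤ 2 exp(−min(t²/(8ℓ), t/8)). -/

import Mathlib

/-!
For a standard Gaussian `X`, the variable `X² - 1` has moment generating function
`e^{-s} (1 - 2s)^{-1/2}`, which is at most `e^{2s²}` for `s ≤ 1/4`. By independence the centred
chi-squared variable `Z - ℓ` is therefore sub-exponential: its mgf is at most `e^{4ℓ s²/2}` on
`|s| ≤ 1/4`. The Chernoff bound with `s = min (t/(4ℓ)) (1/4)` bounds each tail by
`exp (-min (t²/(8ℓ)) (t/8))`.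
-/

open MeasureTheory ProbabilityTheory Real

theorem inv_one_sub_le_exp_add_sq {u : ℝ} (hu : u ≤ 1 / 2) : (1 - u)⁻¹ ≤ exp (u + u ^ 2) := by
  rw [inv_le_iff_one_le_mul₀' (by linarith)]
  rcases le_total u 0 with hu0 | hu0
  · nlinarith [add_one_le_exp (u + u ^ 2), mul_nonneg (neg_nonneg.2 hu0) (sq_nonneg u)]
  · nlinarith [quadratic_le_exp_of_nonneg (by positivity : 0 ≤ u + u ^ 2),
      mul_nonneg hu0 (sq_nonneg u), mul_nonneg (mul_nonneg hu0 hu0) (sq_nonneg u)]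

theorem integral_exp_mul_sq_gaussianReal {c : ℝ} (hc : c < 1 / 2) :
    ∫ x, exp (c * x ^ 2) ∂gaussianReal 0 1 = (√(1 - 2 * c))⁻¹ := by
  have hpdf : ∀ x : ℝ, gaussianPDFReal 0 1 x • exp (c * x ^ 2)
      = (√(2 * π))⁻¹ * exp (-(1 / 2 - c) * x ^ 2) := fun x => by
    rw [gaussianPDFReal, NNReal.coe_one, mul_one, smul_eq_mul, mul_assoc, ← exp_add]
    congr 2
    ring
  have hb : 0 < 1 / 2 - c := by linarith
  rw [integral_gaussianReal_eq_integral_smul one_ne_zero]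
  simp_rw [hpdf]
  rw [integral_const_mul, integral_gaussian, ← sqrt_inv, ← sqrt_mul (by positivity), ← sqrt_inv]
  congr 1
  field_simp

theorem mgf_sq_sub_one_gaussianReal {s : ℝ} (hs : s < 1 / 2) :
    mgf (fun x => x ^ 2 - 1) (gaussianReal 0 1) s = exp (-s) * (√(1 - 2 * s))⁻¹ := by
  simp_rw [mgf, mul_sub, mul_one, exp_sub, integral_div, integral_exp_mul_sq_gaussianReal hs,
    exp_neg]
  ring

theorem mgf_sq_sub_one_gaussianReal_le {s : ℝ} (hs : s ≤ 1 / 4) :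
    mgf (fun x => x ^ 2 - 1) (gaussianReal 0 1) s ≤ exp (2 * s ^ 2) := by
  rw [mgf_sq_sub_one_gaussianReal (by linarith), ← le_div_iff₀' (exp_pos _), ← exp_sub,
    ← sqrt_inv, show 2 * s ^ 2 - -s = (2 * s + (2 * s) ^ 2) / 2 by ring, exp_half]
  exact sqrt_le_sqrt (inv_one_sub_le_exp_add_sq (by linarith))

section Chernoff

variable {Ω : Type*} [MeasurableSpace Ω] {μ : Measure Ω} [IsFiniteMeasure μ] {S : Ω → ℝ}
  {v b t : ℝ}

theorem measureReal_ge_le_exp_of_mgf_le (hv : 0 < v) (hb : 0 ≤ b) (ht : 0 ≤ t)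
    (hint : ∀ s ∈ Set.Icc 0 b, Integrable (fun ω => exp (s * S ω)) μ)
    (hmgf : ∀ s ∈ Set.Icc 0 b, mgf S μ s ≤ exp (v * s ^ 2 / 2)) :
    μ.real {ω | t ≤ S ω} ≤ exp (-min (t ^ 2 / (2 * v)) (b * t / 2)) := by
  set s := min (t / v) b
  have hs : s ∈ Set.Icc 0 b := ⟨le_min (by positivity) hb, min_le_right _ _⟩
  -- `s` maximises `s t - v s² / 2` over `[0, b]`
  have hopt : min (t ^ 2 / (2 * v)) (b * t / 2) ≤ s * t - v * s ^ 2 / 2 := by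
    rcases le_total (t / v) b with h | h
    · rw [show s = t / v from min_eq_left h]
      refine (min_le_left _ _).trans_eq ?_
      field_simp
      ring
    · rw [show s = b from min_eq_right h]
      have : v * b ≤ t := (le_div_iff₀' hv).1 h
      refine (min_le_right _ _).trans ?_
      nlinarith
  calc μ.real {ω | t ≤ S ω} ≤ exp (-s * t) * mgf S μ s :=
        measure_ge_le_exp_mul_mgf t hs.1 (hint s hs)
    _ ≤ exp (-s * t) * exp (v * s ^ 2 / 2) := by gcongr; exact hmgf s hs
    _ = exp (-(s * t - v * s ^ 2 / 2)) := by rw [← exp_add]; ring_nf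
    _ ≤ exp (-min (t ^ 2 / (2 * v)) (b * t / 2)) := exp_le_exp.2 (neg_le_neg hopt)

theorem measureReal_abs_ge_le_two_mul_exp_of_mgf_le (hv : 0 < v) (hb : 0 ≤ b) (ht : 0 ≤ t)
    (hint : ∀ s ∈ Set.Icc (-b) b, Integrable (fun ω => exp (s * S ω)) μ)
    (hmgf : ∀ s ∈ Set.Icc (-b) b, mgf S μ s ≤ exp (v * s ^ 2 / 2)) :
    μ.real {ω | t ≤ |S ω|} ≤ 2 * exp (-min (t ^ 2 / (2 * v)) (b * t / 2)) := by
  have hpos : ∀ s ∈ Set.Icc 0 b, s ∈ Set.Icc (-b) b := fun s hs => ⟨by linarith [hs.1], hs.2⟩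
  have hneg : ∀ s ∈ Set.Icc 0 b, -s ∈ Set.Icc (-b) b := fun s hs =>
    ⟨by linarith [hs.2], by linarith [hs.1]⟩
  have hupper := measureReal_ge_le_exp_of_mgf_le hv hb ht (fun s hs => hint s (hpos s hs))
    (fun s hs => hmgf s (hpos s hs))
  have hlower := measureReal_ge_le_exp_of_mgf_le (S := -S) hv hb ht
    (fun s hs => by simpa [mul_neg, neg_mul] using hint (-s) (hneg s hs))
    (fun s hs => by simpa [mgf_neg] using hmgf (-s) (hneg s hs))
  have hsplit : {ω | t ≤ |S ω|} = {ω | t ≤ S ω} ∪ {ω | t ≤ (-S) ω} := by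
    ext ω
    simp [le_abs]
  rw [hsplit]
  linarith [measureReal_union_le (μ := μ) {ω | t ≤ S ω} {ω | t ≤ (-S) ω}]

end Chernoff

theorem mgf_sum_sq_sub_card_eq {Ω ι : Type*} [MeasurableSpace Ω] {μ : Measure Ω} [Fintype ι]
    {X : ι → Ω → ℝ} (hmeas : ∀ i, Measurable (X i)) (hindep : iIndepFun X μ)
    (hlaw : ∀ i, μ.map (X i) = gaussianReal 0 1) (s : ℝ) :
    mgf (fun ω => ∑ i, X i ω ^ 2 - Fintype.card ι) μ s
      = mgf (fun x => x ^ 2 - 1) (gaussianReal 0 1) s ^ Fintype.card ι := by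
  have hsum : (fun ω => ∑ i, X i ω ^ 2 - Fintype.card ι) = ∑ i, fun ω => X i ω ^ 2 - 1 := by
    ext ω
    simp [Finset.sum_sub_distrib]
  have hfactor : ∀ i, mgf (fun ω => X i ω ^ 2 - 1) μ s
      = mgf (fun x => x ^ 2 - 1) (gaussianReal 0 1) s := fun i => by
    rw [← hlaw i, mgf_map (hmeas i).aemeasurable (by fun_prop)]
    rfl
  have hindep' : iIndepFun (fun i ω => X i ω ^ 2 - 1) μ :=
    hindep.comp (fun _ x => x ^ 2 - 1) fun _ => by fun_prop
  rw [hsum, hindep'.mgf_sum (fun i => by fun_prop)]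
  simp [hfactor]

/-- Chi-squared concentration: if `Z = ∑ Xᵢ²` for i.i.d. standard Gaussians, then
`P(|Z − ℓ| ≥ t) ≤ 2 exp(−min(t²/(8ℓ), t/8))` for all `t ≥ 0`. -/
theorem chi_squared_concentration
    {Ω : Type*} [MeasurableSpace Ω] (μ : Measure Ω) [IsProbabilityMeasure μ]
    (ℓ : ℕ) (hℓ : 0 < ℓ) (X : Fin ℓ → Ω → ℝ)
    (hmeas : ∀ i, Measurable (X i))
    (hindep : iIndepFun X μ)
    (hlaw : ∀ i, Measure.map (X i) μ = gaussianReal 0 1)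
    (t : ℝ) (ht : 0 ≤ t) :
    μ {ω | t ≤ |(∑ i, (X i ω) ^ 2) - (ℓ : ℝ)|} ≤
      ENNReal.ofReal (2 * Real.exp (-(min (t ^ 2 / (8 * ℓ)) (t / 8)))) := by
  have hmgf (s : ℝ) : mgf (fun ω => ∑ i, X i ω ^ 2 - ℓ) μ s
      = mgf (fun x => x ^ 2 - 1) (gaussianReal 0 1) s ^ ℓ := by
    simpa using mgf_sum_sq_sub_card_eq hmeas hindep hlaw s
  have hint : ∀ s ∈ Set.Icc (-(1 / 4)) (1 / 4),
      Integrable (fun ω => exp (s * (∑ i, X i ω ^ 2 - ℓ))) μ := fun s hs => by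
    refine mgf_pos_iff.mp ?_
    rw [hmgf, mgf_sq_sub_one_gaussianReal (by linarith [hs.2])]
    exact pow_pos (mul_pos (exp_pos _) (inv_pos.2 (sqrt_pos.2 (by linarith [hs.2])))) ℓ
  have hmgf_le : ∀ s ∈ Set.Icc (-(1 / 4)) (1 / 4),
      mgf (fun ω => ∑ i, X i ω ^ 2 - ℓ) μ s ≤ exp (4 * ℓ * s ^ 2 / 2) := fun s hs => by
    rw [hmgf, show 4 * ℓ * s ^ 2 / 2 = ℓ * (2 * s ^ 2) by ring, exp_nat_mul]
    exact pow_le_pow_left₀ mgf_nonneg (mgf_sq_sub_one_gaussianReal_le hs.2) ℓ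
  have htail := measureReal_abs_ge_le_two_mul_exp_of_mgf_le (by positivity) (by norm_num) ht
    hint hmgf_le
  rw [← ofReal_measureReal]
  refine ENNReal.ofReal_le_ofReal (htail.trans_eq ?_)
  ring_nf
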